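/- Let B be an n×n positive semidefinite Hermitian matrix with S_{n-k}(B) = 1 (normalized (n−k)-th elementary symmetric function equals 1). Then S_{n-k}(B²) ≥ 1, i.e., in form language, ω^k ∧ ω_{B²}^{n-k} ≥ ω^n (with the appropriate normalization). -/
import Mathlib


open ComplexOrder

/-- The normalized `j`-th elementary symmetric function of an `n × n` complex matrix `M`:
the coefficient of `t^(n-j)` in `(binom(n,j))⁻¹ · det (M + t·Id)`. -/
noncomputable def Sk (n j : ℕ) (M : Matrix (Fin n) (Fin n) ℂ) : ℂ :=
  ((n.choose j : ℂ))⁻¹ *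
    ((Matrix.det (M.map Polynomial.C +
      (Polynomial.X : Polynomial ℂ) • (1 : Matrix (Fin n) (Fin n) (Polynomial ℂ)))).coeff (n - j))

open Polynomial Matrix Finset

noncomputable def detPoly (n : ℕ) (M : Matrix (Fin n) (Fin n) ℂ) : Polynomial ℂ :=
  (M.map Polynomial.C +
      (Polynomial.X : Polynomial ℂ) • (1 : Matrix (Fin n) (Fin n) (Polynomial ℂ))).det

lemma detPoly_conj (n : ℕ) (U M : Matrix (Fin n) (Fin n) ℂ)
    (h1 : U * star U = 1) (h2 : star U * U = 1) :
    detPoly n (U * M * star U) = detPoly n M := by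
  have key : (U * M * star U).map Polynomial.C +
      (Polynomial.X : Polynomial ℂ) • (1 : Matrix (Fin n) (Fin n) (Polynomial ℂ)) =
      U.map Polynomial.C * (M.map Polynomial.C +
        (Polynomial.X : Polynomial ℂ) • (1 : Matrix (Fin n) (Fin n) (Polynomial ℂ)))
        * (star U).map Polynomial.C := by
    rw [mul_add, add_mul]
    congr 1
    · simp [Matrix.map_mul]
    · rw [mul_smul_comm, mul_one, smul_mul_assoc, ← Matrix.map_mul, h1]
      simp
  unfold detPoly
  rw [key, det_mul, det_mul]
  have hdet : (U.map (Polynomial.C (R := ℂ))).det * ((star U).map Polynomial.C).det = 1 := by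
    rw [← det_mul, ← Matrix.map_mul, h1]; simp
  rw [mul_right_comm, hdet, one_mul]

lemma detPoly_diagonal (n : ℕ) (d : Fin n → ℂ) :
    detPoly n (Matrix.diagonal d) = ∏ i, (Polynomial.X + Polynomial.C (d i)) := by
  unfold detPoly
  have : (Matrix.diagonal d).map Polynomial.C +
      (Polynomial.X : Polynomial ℂ) • (1 : Matrix (Fin n) (Fin n) (Polynomial ℂ)) =
      Matrix.diagonal (fun i => Polynomial.X + Polynomial.C (d i)) := by
    ext i j
    by_cases h : i = j <;>
      simp [Matrix.add_apply, Matrix.smul_apply, Matrix.diagonal_apply, Matrix.map_apply,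
        Matrix.one_apply, h, add_comm]
  rw [this, det_diagonal]

lemma detPoly_coeff (n j : ℕ) (hj : j ≤ n) (d : Fin n → ℂ) :
    (detPoly n (Matrix.diagonal d)).coeff (n - j) =
      ∑ t ∈ Finset.powersetCard j Finset.univ, ∏ i ∈ t, d i := by
  rw [detPoly_diagonal]
  have h : n - j ≤ #(Finset.univ : Finset (Fin n)) := by simp [Nat.sub_le]
  rw [Finset.prod_X_add_C_coeff _ _ h]
  congr 1
  simp [Nat.sub_sub_self hj]

theorem sk_sq_ge_one (n k : ℕ) (hk1 : 1 ≤ k) (hkn : k ≤ n)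
    (B : Matrix (Fin n) (Fin n) ℂ) (hB : B.PosSemidef)
    (hSB : Sk n (n - k) B = 1) :
    1 ≤ (Sk n (n - k) (B * B)).re := by
  have hH := hB.1
  set U : Matrix (Fin n) (Fin n) ℂ := ↑hH.eigenvectorUnitary with hU
  have h1 : U * star U = 1 := Matrix.mem_unitaryGroup_iff.mp hH.eigenvectorUnitary.2
  have h2 : star U * U = 1 := Matrix.mem_unitaryGroup_iff'.mp hH.eigenvectorUnitary.2
  set lam : Fin n → ℝ := hH.eigenvalues with hlam
  have hspec : B = U * Matrix.diagonal (fun i => (lam i : ℂ)) * star U := hH.spectral_theorem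
  have hBB : B * B = U * Matrix.diagonal (fun i => ((lam i : ℂ))^2) * star U := by
    rw [hspec]
    have : Matrix.diagonal (fun i => (lam i : ℂ)) * Matrix.diagonal (fun i => (lam i : ℂ)) =
        Matrix.diagonal (fun i => ((lam i : ℂ))^2) := by
      rw [Matrix.diagonal_mul_diagonal]; congr 1; ext i; ring
    calc U * Matrix.diagonal (fun i => (lam i : ℂ)) * star U *
          (U * Matrix.diagonal (fun i => (lam i : ℂ)) * star U)
        = U * (Matrix.diagonal (fun i => (lam i : ℂ)) * ((star U * U) *
            Matrix.diagonal (fun i => (lam i : ℂ)))) * star U := by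
          simp only [Matrix.mul_assoc]
      _ = U * Matrix.diagonal (fun i => ((lam i : ℂ))^2) * star U := by
          rw [h2, one_mul, this, Matrix.mul_assoc]
  have hnk : n - k ≤ n := Nat.sub_le n k
  have hsub : n - (n - k) = k := Nat.sub_sub_self hkn
  -- j used in Sk is n - k; coefficient index is n - (n - k) = k... but careful:
  -- Sk n (n-k) M uses coeff (n - (n-k)) = coeff k, and detPoly_coeff with j := n - k.
  have hcoeffB : Sk n (n - k) B =
      ((n.choose (n - k) : ℂ))⁻¹ *
        ∑ t ∈ Finset.powersetCard (n - k) Finset.univ, ∏ i ∈ t, (lam i : ℂ) := by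
    unfold Sk
    congr 1
    have : (Matrix.det (B.map Polynomial.C + (Polynomial.X : Polynomial ℂ) •
        (1 : Matrix (Fin n) (Fin n) (Polynomial ℂ)))) = detPoly n B := rfl
    rw [this, hspec, detPoly_conj n U _ h1 h2]
    have := detPoly_coeff n (n - k) hnk (fun i => (lam i : ℂ))
    rw [hsub] at this
    rw [hsub, this]
  have hcoeffBB : Sk n (n - k) (B * B) =
      ((n.choose (n - k) : ℂ))⁻¹ *
        ∑ t ∈ Finset.powersetCard (n - k) Finset.univ, ∏ i ∈ t, ((lam i : ℂ))^2 := by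
    unfold Sk
    congr 1
    have : (Matrix.det ((B * B).map Polynomial.C + (Polynomial.X : Polynomial ℂ) •
        (1 : Matrix (Fin n) (Fin n) (Polynomial ℂ)))) = detPoly n (B * B) := rfl
    rw [this, hBB, detPoly_conj n U _ h1 h2]
    have := detPoly_coeff n (n - k) hnk (fun i => ((lam i : ℂ))^2)
    rw [hsub] at this
    rw [hsub, this]
  -- pass to real sums
  set C : ℕ := n.choose (n - k) with hC
  have hCpos : 0 < C := Nat.choose_pos hnk
  set e1 : ℝ := ∑ t ∈ Finset.powersetCard (n - k) (Finset.univ : Finset (Fin n)),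
      ∏ i ∈ t, lam i with he1
  set e2 : ℝ := ∑ t ∈ Finset.powersetCard (n - k) (Finset.univ : Finset (Fin n)),
      ∏ i ∈ t, (lam i)^2 with he2
  have hcast1 : (∑ t ∈ Finset.powersetCard (n - k) (Finset.univ : Finset (Fin n)),
      ∏ i ∈ t, (lam i : ℂ)) = (e1 : ℂ) := by
    rw [he1]; push_cast; rfl
  have hcast2 : (∑ t ∈ Finset.powersetCard (n - k) (Finset.univ : Finset (Fin n)),
      ∏ i ∈ t, ((lam i : ℂ))^2) = (e2 : ℂ) := by
    rw [he2]; push_cast; rfl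
  have he1C : e1 = C := by
    have := hSB
    rw [hcoeffB, hcast1] at this
    have hCne : ((C : ℂ)) ≠ 0 := by exact_mod_cast hCpos.ne'
    have : (e1 : ℂ) = (C : ℂ) := by
      field_simp at this
      exact_mod_cast this
    exact_mod_cast this
  -- Cauchy-Schwarz
  have hcard : #(Finset.powersetCard (n - k) (Finset.univ : Finset (Fin n))) = C := by
    simp [hC, Finset.card_powersetCard]
  have hCS : e1 ^ 2 ≤ C * e2 := by
    have := sq_sum_le_card_mul_sum_sq
      (s := Finset.powersetCard (n - k) (Finset.univ : Finset (Fin n)))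
      (f := fun t => ∏ i ∈ t, lam i)
    rw [hcard] at this
    simpa [he1, he2, Finset.prod_pow] using this
  have he2C : (C : ℝ) ≤ e2 := by
    rw [he1C] at hCS
    have hCR : (0:ℝ) < C := by exact_mod_cast hCpos
    nlinarith
  rw [hcoeffBB, hcast2]
  have : (((C : ℂ))⁻¹ * (e2 : ℂ)).re = (C : ℝ)⁻¹ * e2 := by
    rw [← Complex.ofReal_natCast, ← Complex.ofReal_inv, ← Complex.ofReal_mul, Complex.ofReal_re]
  rw [this, inv_mul_eq_div, le_div_iff₀ (by exact_mod_cast hCpos), one_mul]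
  simpa using he2C
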